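/- arXiv:1401.2530 — 2 statements merged into one kernel-verified Lean document; each statement's English description precedes it below -/
import Mathlib

section
/- Let s = I(0_K, a_1, ..., a_{T-1}) and s' = I(1_K, a_1, ..., a_{T-1}) and let τ = τ_1·T + τ_2 with 1 ≤ τ_2 ≤ T-1. Then R_{s'}(τ) = R_s(τ) + 2·d(a_{τ_2}) + 2·d(a_{T-τ_2}), where d(a) = 2|{k : a(k)=1}| - K is the balance difference. -/
/-- Periodic (cross-)correlation of binary sequences of period `N`. -/
def corr (N : ℕ) (a b : ℕ → ZMod 2) (τ : ℕ) : ℤ :=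
  ∑ t ∈ Finset.range N, (-1 : ℤ) ^ ((a t + b (t + τ)).val)

/-- Balance difference `d(a) = 2|support(a)| - K` of a sequence of period `K`. -/
def bal (K : ℕ) (a : ℕ → ZMod 2) : ℤ :=
  2 * ((((Finset.range K).filter (fun k => a k = 1)).card : ℤ)) - (K : ℤ)

lemma sum_range_mul' (K T : ℕ) (F : ℕ → ℤ) :
    ∑ t ∈ Finset.range (K * T), F t
      = ∑ k ∈ Finset.range K, ∑ i ∈ Finset.range T, F (k * T + i) := by
  induction K with
  | zero => simp
  | succ n ih =>
      rw [Nat.succ_mul, Finset.sum_range_add, ih, Finset.sum_range_succ]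

lemma shift_sum (K : ℕ) (g : ℕ → ℤ) (hg : Function.Periodic g K) (m : ℕ) :
    ∑ k ∈ Finset.range K, g (k + m) = ∑ k ∈ Finset.range K, g k := by
  induction m with
  | zero => simp
  | succ m ih =>
      have h2 : ∑ k ∈ Finset.range (K + 1), g (k + m)
          = (∑ k ∈ Finset.range K, g (k + 1 + m)) + g (0 + m) := by
        rw [Finset.sum_range_succ' (fun k => g (k + m)) K]
      rw [Finset.sum_range_succ] at h2
      have hK : g (K + m) = g (0 + m) := by simpa [Nat.add_comm] using hg m
      have h3 : ∑ k ∈ Finset.range K, g (k + 1 + m) = ∑ k ∈ Finset.range K, g (k + m) := by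
        rw [hK] at h2; linarith
      calc ∑ k ∈ Finset.range K, g (k + (m + 1))
          = ∑ k ∈ Finset.range K, g (k + 1 + m) := by
            apply Finset.sum_congr rfl; intro k _; congr 1; omega
        _ = ∑ k ∈ Finset.range K, g (k + m) := h3
        _ = _ := ih

lemma bal_eq (K : ℕ) (a : ℕ → ZMod 2) :
    ∑ k ∈ Finset.range K, (-1 : ℤ) ^ ((a k).val) = -bal K a := by
  classical
  rw [← Finset.sum_filter_add_sum_filter_not (Finset.range K) (fun k => a k = 1)]
  have e1 : ∑ k ∈ (Finset.range K).filter (fun k => a k = 1), (-1 : ℤ) ^ ((a k).val)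
      = -(((Finset.range K).filter (fun k => a k = 1)).card : ℤ) := by
    have hterm : ∀ k ∈ (Finset.range K).filter (fun k => a k = 1),
        (-1 : ℤ) ^ ((a k).val) = -1 := by
      intro k hk
      rw [(Finset.mem_filter.mp hk).2]
      norm_num [ZMod.val_one]
    rw [Finset.sum_congr rfl hterm, Finset.sum_const, nsmul_eq_mul]
    ring
  have e2 : ∑ k ∈ (Finset.range K).filter (fun k => ¬ a k = 1), (-1 : ℤ) ^ ((a k).val)
      = (((Finset.range K).filter (fun k => ¬ a k = 1)).card : ℤ) := by
    have hterm : ∀ k ∈ (Finset.range K).filter (fun k => ¬ a k = 1),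
        (-1 : ℤ) ^ ((a k).val) = 1 := by
      intro k hk
      have h : ¬ a k = 1 := (Finset.mem_filter.mp hk).2
      have h0 : a k = 0 := by
        have hall : ∀ x : ZMod 2, x ≠ 1 → x = 0 := by decide
        exact hall _ h
      rw [h0]
      simp [ZMod.val_zero]
    rw [Finset.sum_congr rfl hterm, Finset.sum_const, nsmul_eq_mul]
    ring
  rw [e1, e2, bal]
  have hcard : ((Finset.range K).filter (fun k => a k = 1)).card
      + ((Finset.range K).filter (fun k => ¬ a k = 1)).card = K := by
    have := Finset.card_filter_add_card_filter_not
      (s := Finset.range K) (p := fun k => a k = 1)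
    simpa using this
  have hc : (((Finset.range K).filter (fun k => ¬ a k = 1)).card : ℤ)
      = (K : ℤ) - (((Finset.range K).filter (fun k => a k = 1)).card : ℤ) := by
    omega
  rw [hc]; ring

lemma neg_pow1 : ∀ x : ZMod 2, (-1 : ℤ) ^ (((1 : ZMod 2) + x).val) = -(-1 : ℤ) ^ (x.val) := by
  decide

lemma neg_pow2 : ∀ x : ZMod 2, (-1 : ℤ) ^ ((x + (1 : ZMod 2)).val) = -(-1 : ℤ) ^ (x.val) := by
  decide

/-- `R_{s'}(τ) = R_s(τ) + 2d(a_{τ2}) + 2d(a_{T-τ2})` for `1 ≤ τ2 ≤ T-1`. -/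
theorem stmt3 (K T : ℕ) (hK : 0 < K) (hT : 0 < T)
    (a : ℕ → ℕ → ZMod 2) (s s' : ℕ → ZMod 2)
    (ha : ∀ i, Function.Periodic (a i) K)
    (hs : Function.Periodic s (K * T)) (hs' : Function.Periodic s' (K * T))
    (hs0 : ∀ k, s (k * T) = 0) (hs'0 : ∀ k, s' (k * T) = 1)
    (hcol : ∀ k i, 1 ≤ i → i < T → s (k * T + i) = a i k)
    (hcol' : ∀ k i, 1 ≤ i → i < T → s' (k * T + i) = a i k)
    (τ1 τ2 : ℕ) (h1 : 1 ≤ τ2) (h2 : τ2 < T) :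
    corr (K * T) s' s' (τ1 * T + τ2) =
      corr (K * T) s s (τ1 * T + τ2) + 2 * bal K (a τ2) + 2 * bal K (a (T - τ2)) := by
  classical
  have key : ∀ k ∈ Finset.range K, ∀ i ∈ Finset.range T,
      ((-1 : ℤ) ^ ((s' (k * T + i) + s' (k * T + i + (τ1 * T + τ2))).val)
        - (-1 : ℤ) ^ ((s (k * T + i) + s (k * T + i + (τ1 * T + τ2))).val))
      = (if i = 0 then -2 * (-1 : ℤ) ^ ((a τ2 (k + τ1)).val) else 0)
        + (if i = T - τ2 then -2 * (-1 : ℤ) ^ ((a (T - τ2) k).val) else 0) := by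
    intro k _ i hi
    have hiT : i < T := Finset.mem_range.mp hi
    by_cases hi0 : i = 0
    · subst hi0
      have ht : k * T + 0 + (τ1 * T + τ2) = (k + τ1) * T + τ2 := by ring
      rw [ht, add_zero, hs'0 k, hs0 k, hcol' (k + τ1) τ2 h1 h2, hcol (k + τ1) τ2 h1 h2]
      rw [if_pos rfl, if_neg (by omega), neg_pow1, zero_add]
      ring
    · by_cases hiT2 : i = T - τ2
      · subst hiT2
        have ht : k * T + (T - τ2) + (τ1 * T + τ2) = (k + τ1 + 1) * T := by
          have : (T - τ2) + τ2 = T := by omega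
          calc k * T + (T - τ2) + (τ1 * T + τ2)
              = k * T + τ1 * T + ((T - τ2) + τ2) := by ring
            _ = k * T + τ1 * T + T := by rw [this]
            _ = (k + τ1 + 1) * T := by ring
        rw [ht, hcol' k (T - τ2) (by omega) (by omega), hcol k (T - τ2) (by omega) (by omega),
          hs'0 (k + τ1 + 1), hs0 (k + τ1 + 1)]
        rw [if_neg (by omega), if_pos rfl, neg_pow2, add_zero]
        ring
      · have hi1 : 1 ≤ i := by omega
        rw [hcol' k i hi1 hiT, hcol k i hi1 hiT]
        by_cases hsum : i + τ2 < T
        · have ht : k * T + i + (τ1 * T + τ2) = (k + τ1) * T + (i + τ2) := by ring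
          rw [ht, hcol' (k + τ1) (i + τ2) (by omega) hsum, hcol (k + τ1) (i + τ2) (by omega) hsum]
          rw [if_neg hi0, if_neg hiT2]
          ring
        · have hne : i + τ2 ≠ T := by omega
          have hge : T ≤ i + τ2 := by omega
          have ht : k * T + i + (τ1 * T + τ2) = (k + τ1 + 1) * T + (i + τ2 - T) := by
            have : T + (i + τ2 - T) = i + τ2 := by omega
            calc k * T + i + (τ1 * T + τ2)
                = k * T + τ1 * T + (i + τ2) := by ring
              _ = k * T + τ1 * T + (T + (i + τ2 - T)) := by rw [this]
              _ = (k + τ1 + 1) * T + (i + τ2 - T) := by ring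
          rw [ht, hcol' (k + τ1 + 1) (i + τ2 - T) (by omega) (by omega),
            hcol (k + τ1 + 1) (i + τ2 - T) (by omega) (by omega)]
          rw [if_neg hi0, if_neg hiT2]
          ring
  have expand : ∀ f : ℕ → ZMod 2, corr (K * T) f f (τ1 * T + τ2)
      = ∑ k ∈ Finset.range K, ∑ i ∈ Finset.range T,
          (-1 : ℤ) ^ ((f (k * T + i) + f (k * T + i + (τ1 * T + τ2))).val) := fun f =>
    sum_range_mul' K T _
  have main : corr (K * T) s' s' (τ1 * T + τ2) - corr (K * T) s s (τ1 * T + τ2)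
      = 2 * bal K (a τ2) + 2 * bal K (a (T - τ2)) := by
    rw [expand s', expand s, ← Finset.sum_sub_distrib]
    have step1 : ∑ k ∈ Finset.range K,
        (∑ i ∈ Finset.range T,
            (-1 : ℤ) ^ ((s' (k * T + i) + s' (k * T + i + (τ1 * T + τ2))).val)
          - ∑ i ∈ Finset.range T,
            (-1 : ℤ) ^ ((s (k * T + i) + s (k * T + i + (τ1 * T + τ2))).val))
        = ∑ k ∈ Finset.range K,
          ((-2 * (-1 : ℤ) ^ ((a τ2 (k + τ1)).val)) + (-2 * (-1 : ℤ) ^ ((a (T - τ2) k).val))) := by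
      apply Finset.sum_congr rfl
      intro k hk
      rw [← Finset.sum_sub_distrib]
      rw [Finset.sum_congr rfl (key k hk)]
      rw [Finset.sum_add_distrib, Finset.sum_ite_eq' (Finset.range T) 0 fun _ =>
        -2 * (-1 : ℤ) ^ ((a τ2 (k + τ1)).val),
        Finset.sum_ite_eq' (Finset.range T) (T - τ2) fun _ =>
        -2 * (-1 : ℤ) ^ ((a (T - τ2) k).val)]
      rw [if_pos (Finset.mem_range.mpr hT), if_pos (Finset.mem_range.mpr (by omega))]
    rw [step1, Finset.sum_add_distrib]
    have hb1 : ∑ k ∈ Finset.range K, -2 * (-1 : ℤ) ^ ((a τ2 (k + τ1)).val)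
        = 2 * bal K (a τ2) := by
      rw [← Finset.mul_sum]
      have hper : Function.Periodic (fun n => (-1 : ℤ) ^ ((a τ2 n).val)) K := by
        intro x; simp [ha τ2 x]
      rw [shift_sum K _ hper τ1, bal_eq]
      ring
    have hb2 : ∑ k ∈ Finset.range K, -2 * (-1 : ℤ) ^ ((a (T - τ2) k).val)
        = 2 * bal K (a (T - τ2)) := by
      rw [← Finset.mul_sum, bal_eq]
      ring
    rw [hb1, hb2]
  linarith
end

section
/- Let s = I(0_K, a_1, ..., a_{T-1}) and s' = I(1_K, a_1, ..., a_{T-1}) with d(a_x) = d(a_{T-x}) = c for all 1 ≤ x ≤ T-1, where c ≠ K is a constant, and suppose s has ideal autocorrelation. Then R_{ss'} = R_{s's} and this common cross-correlation function takes exactly three values: KT - 2K at τ = 0, -1 - 2K at nonzero τ ≡ 0 mod T, and -1 + 2c at τ ≢ 0 mod T. -/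
/-! Read `s` as a `K × T` array whose `i`-th column is `a_i`. The sequence `s'` is `s` with the
entries at the multiples of `T` flipped, so each cross-correlation differs from the
autocorrelation `R_s(τ)` by twice a sum of signs over one column: the column `≡ -τ (mod T)` for
`R_{ss'}` and the column `≡ τ (mod T)` for `R_{s's}`. Such a column sum is `K` for the zero
column and `-d(a_i) = -c` otherwise, so both cross-correlations equal
`R_s(τ) - 2 (if T ∣ τ then K else -c)`; the values of `R_s` (`KT` at multiples of `KT`, `-1`
elsewhere) give the three values. -/

open Finset

lemma sum_neg_one_pow_val_eq_neg_bal (K : ℕ) (b : ℕ → ZMod 2) :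
    ∑ k ∈ range K, (-1 : ℤ) ^ (b k).val = -bal K b := by
  have h : ∀ x : ZMod 2, (-1 : ℤ) ^ x.val = 1 - 2 * if x = 1 then 1 else 0 := by decide
  simp only [h, bal, sum_sub_distrib, sum_const, card_range, ← mul_sum, sum_boole]
  ring

lemma Function.Periodic.sum_range_comp_add {g : ℕ → ℤ} {K : ℕ} (hg : Function.Periodic g K)
    (q : ℕ) : ∑ k ∈ range K, g (q + k) = ∑ k ∈ range K, g k := by
  have hq : ∑ k ∈ range q, g (K + k) = ∑ k ∈ range q, g k :=
    sum_congr rfl fun k _ => by rw [add_comm]; exact hg k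
  have h := sum_range_add g K q
  rw [add_comm, sum_range_add, hq, add_comm] at h
  exact add_right_cancel h

lemma dvd_sub_mod_mod_add_self {T : ℕ} (hT : 0 < T) (τ : ℕ) : T ∣ (T - τ % T) % T + τ := by
  have h : (T - τ % T) % T + τ ≡ T - τ % T + τ % T [MOD T] :=
    (Nat.mod_modEq _ _).add (Nat.mod_modEq _ _).symm
  rw [Nat.sub_add_cancel (Nat.mod_lt τ hT).le] at h
  exact Nat.modEq_zero_iff_dvd.1 (h.trans (Nat.modEq_zero_iff_dvd.2 dvd_rfl))

lemma sum_filter_dvd_add_eq_sum_range (g : ℕ → ℤ) {K T τ r : ℕ} (hr : r < T)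
    (hrτ : T ∣ r + τ) :
    ∑ t ∈ (range (K * T)).filter (fun t => T ∣ t + τ), g t = ∑ k ∈ range K, g (k * T + r) := by
  have hT : 0 < T := by omega
  have himage : (range (K * T)).filter (fun t => T ∣ t + τ) = (range K).image (· * T + r) := by
    ext t
    simp only [mem_filter, mem_range, mem_image]
    constructor
    · rintro ⟨ht, htτ⟩
      have hmod : t ≡ r [MOD T] := Nat.ModEq.add_right_cancel' τ
        ((Nat.modEq_zero_iff_dvd.2 htτ).trans (Nat.modEq_zero_iff_dvd.2 hrτ).symm)
      rw [Nat.ModEq, Nat.mod_eq_of_lt hr] at hmod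
      exact ⟨t / T, (Nat.div_lt_iff_lt_mul hT).2 ht, hmod ▸ Nat.div_add_mod' t T⟩
    · rintro ⟨k, hk, rfl⟩
      refine ⟨?_, by rw [add_assoc]; exact dvd_add (dvd_mul_left T k) hrτ⟩
      calc k * T + r < (k + 1) * T := by rw [add_mul]; omega
        _ ≤ K * T := Nat.mul_le_mul_right T hk
  rw [himage, sum_image fun x _ y _ h => Nat.eq_of_mul_eq_mul_right hT (Nat.add_right_cancel h)]

lemma corr_add_ite_right (N : ℕ) (u v : ℕ → ZMod 2) (P : ℕ → Prop) [DecidablePred P] (τ : ℕ) :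
    corr N u (fun t => v t + if P t then 1 else 0) τ =
      corr N u v τ - 2 * ∑ t ∈ (range N).filter (fun t => P (t + τ)),
        (-1 : ℤ) ^ (u t + v (t + τ)).val := by
  have hsign : ∀ x : ZMod 2, (-1 : ℤ) ^ (x + 1).val = -(-1) ^ x.val := by decide
  rw [corr, corr, sum_filter, mul_sum, ← sum_sub_distrib]
  refine sum_congr rfl fun t _ => ?_
  split_ifs
  · rw [← add_assoc, hsign]; ring
  · simp

lemma corr_add_ite_left (N : ℕ) (u v : ℕ → ZMod 2) (P : ℕ → Prop) [DecidablePred P] (τ : ℕ) :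
    corr N (fun t => u t + if P t then 1 else 0) v τ =
      corr N u v τ - 2 * ∑ t ∈ (range N).filter P, (-1 : ℤ) ^ (u t + v (t + τ)).val := by
  have hsign : ∀ x : ZMod 2, (-1 : ℤ) ^ (x + 1).val = -(-1) ^ x.val := by decide
  rw [corr, corr, sum_filter, mul_sum, ← sum_sub_distrib]
  refine sum_congr rfl fun t _ => ?_
  split_ifs
  · rw [add_right_comm, hsign]; ring
  · simp

lemma corr_self_of_dvd {N : ℕ} {u : ℕ → ZMod 2} (hu : Function.Periodic u N) {τ : ℕ}
    (hτ : N ∣ τ) : corr N u u τ = N := by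
  obtain ⟨m, rfl⟩ := hτ
  have hper : ∀ t, u (t + N * m) = u t := fun t => by simpa [mul_comm] using hu.nat_mul m t
  have hself : ∀ x : ZMod 2, x + x = 0 := by decide
  simp [corr, hper, hself]

section Interleaved

variable {K T : ℕ} {a : ℕ → ℕ → ZMod 2} {s : ℕ → ZMod 2}

lemma interleaved_apply (hT : 0 < T) {z : ZMod 2} (h0 : ∀ k, s (k * T) = z)
    (hcol : ∀ k i, 1 ≤ i → i < T → s (k * T + i) = a i k) (u : ℕ) :
    s u = if T ∣ u then z else a (u % T) (u / T) := by
  split_ifs with hu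
  · obtain ⟨m, rfl⟩ := hu
    rw [mul_comm]
    exact h0 m
  · have hpos : 1 ≤ u % T := Nat.pos_of_ne_zero (mt Nat.dvd_of_mod_eq_zero hu)
    rw [← hcol _ _ hpos (Nat.mod_lt u hT), Nat.div_add_mod']

lemma interleaved_apply_mul_add (hT : 0 < T) {z : ZMod 2} (h0 : ∀ k, s (k * T) = z)
    (hcol : ∀ k i, 1 ≤ i → i < T → s (k * T + i) = a i k) (k q : ℕ) :
    s (k * T + q) = if T ∣ q then z else a (q % T) (k + q / T) := by
  simp only [interleaved_apply hT h0 hcol, mul_comm k T, Nat.dvd_add_right (dvd_mul_right T k),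
    Nat.mul_add_mod, Nat.mul_add_div hT]

lemma interleaved_periodic (hT : 0 < T) {z : ZMod 2} (h0 : ∀ k, s (k * T) = z)
    (hcol : ∀ k i, 1 ≤ i → i < T → s (k * T + i) = a i k) (ha : ∀ i, Function.Periodic (a i) K) :
    Function.Periodic s (K * T) := fun u => by
  rw [add_comm, interleaved_apply_mul_add hT h0 hcol, interleaved_apply hT h0 hcol, add_comm K,
    ha]

lemma interleaved_eq_add_ite {s' : ℕ → ZMod 2} (hT : 0 < T) (h0 : ∀ k, s (k * T) = 0)
    (h0' : ∀ k, s' (k * T) = 1) (hcol : ∀ k i, 1 ≤ i → i < T → s (k * T + i) = a i k)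
    (hcol' : ∀ k i, 1 ≤ i → i < T → s' (k * T + i) = a i k) :
    s' = fun t => s t + if T ∣ t then 1 else 0 := funext fun u => by
  rw [interleaved_apply hT h0' hcol', interleaved_apply hT h0 hcol]
  split_ifs <;> simp

variable (hT : 0 < T) (h0 : ∀ k, s (k * T) = 0)
  (hcol : ∀ k i, 1 ≤ i → i < T → s (k * T + i) = a i k) (ha : ∀ i, Function.Periodic (a i) K)
  {c : ℤ} (hbal : ∀ x, 1 ≤ x → x < T → bal K (a x) = c)
include hT h0 hcol ha hbal

lemma sum_neg_one_pow_val_column (q : ℕ) :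
    ∑ k ∈ range K, (-1 : ℤ) ^ (s (k * T + q)).val = if T ∣ q then (K : ℤ) else -c := by
  simp_rw [interleaved_apply_mul_add hT h0 hcol]
  split_ifs with hq
  · simp
  · have hpos : 1 ≤ q % T := Nat.pos_of_ne_zero (mt Nat.dvd_of_mod_eq_zero hq)
    have hshift := ((ha (q % T)).comp fun x => (-1 : ℤ) ^ x.val).sum_range_comp_add (q / T)
    simp only [Function.comp_apply, add_comm (q / T)] at hshift
    rw [hshift, sum_neg_one_pow_val_eq_neg_bal, hbal _ hpos (Nat.mod_lt q hT)]

lemma corr_self_flip (τ : ℕ) :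
    corr (K * T) s (fun t => s t + if T ∣ t then 1 else 0) τ =
      corr (K * T) s s τ - 2 * if T ∣ τ then (K : ℤ) else -c := by
  have hrτ : T ∣ (T - τ % T) % T + τ := dvd_sub_mod_mod_add_self hT τ
  have hr : T ∣ (T - τ % T) % T ↔ T ∣ τ :=
    ⟨fun h => (Nat.dvd_add_right h).1 hrτ, fun h => (Nat.dvd_add_left h).1 hrτ⟩
  have hcolumn : ∀ t ∈ (range (K * T)).filter (fun t => T ∣ t + τ),
      (-1 : ℤ) ^ (s t + s (t + τ)).val = (-1 : ℤ) ^ (s t).val := fun t ht => by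
    rw [interleaved_apply hT h0 hcol (t + τ), if_pos (mem_filter.1 ht).2, add_zero]
  rw [corr_add_ite_right, sum_congr rfl hcolumn,
    sum_filter_dvd_add_eq_sum_range _ (Nat.mod_lt _ hT) hrτ,
    sum_neg_one_pow_val_column hT h0 hcol ha hbal]
  simp only [hr]

lemma corr_flip_self (τ : ℕ) :
    corr (K * T) (fun t => s t + if T ∣ t then 1 else 0) s τ =
      corr (K * T) s s τ - 2 * if T ∣ τ then (K : ℤ) else -c := by
  have hcolumn : ∀ t ∈ (range (K * T)).filter (fun t => T ∣ t),
      (-1 : ℤ) ^ (s t + s (t + τ)).val = (-1 : ℤ) ^ (s (t + τ)).val := fun t ht => by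
    rw [interleaved_apply hT h0 hcol t, if_pos (mem_filter.1 ht).2, zero_add]
  have hrows := sum_filter_dvd_add_eq_sum_range (K := K) (τ := 0)
    (fun t => (-1 : ℤ) ^ (s (t + τ)).val) hT (by simp)
  simp only [add_zero] at hrows
  rw [corr_add_ite_left, sum_congr rfl hcolumn, hrows,
    sum_neg_one_pow_val_column hT h0 hcol ha hbal]

end Interleaved

theorem stmt17_general (K T : ℕ) (hT : 0 < T)
    (a : ℕ → ℕ → ZMod 2) (s s' : ℕ → ZMod 2)
    (ha : ∀ i, Function.Periodic (a i) K)
    (hs0 : ∀ k, s (k * T) = 0) (hs'0 : ∀ k, s' (k * T) = 1)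
    (hcol : ∀ k i, 1 ≤ i → i < T → s (k * T + i) = a i k)
    (hcol' : ∀ k i, 1 ≤ i → i < T → s' (k * T + i) = a i k)
    (c : ℤ)
    (hbal : ∀ x : ℕ, 1 ≤ x → x < T → bal K (a x) = c ∧ bal K (a (T - x)) = c)
    (hideal : ∀ τ : ℕ, ¬ (K * T ∣ τ) → corr (K * T) s s τ = -1) :
    (∀ τ : ℕ, corr (K * T) s s' τ = corr (K * T) s' s τ) ∧
    (∀ τ : ℕ, K * T ∣ τ → corr (K * T) s s' τ = (K : ℤ) * T - 2 * K) ∧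
    (∀ τ : ℕ, T ∣ τ → ¬ (K * T ∣ τ) → corr (K * T) s s' τ = -1 - 2 * K) ∧
    (∀ τ : ℕ, ¬ (T ∣ τ) → corr (K * T) s s' τ = -1 + 2 * c) := by
  have hbal' : ∀ x, 1 ≤ x → x < T → bal K (a x) = c := fun x h1 h2 => (hbal x h1 h2).1
  obtain rfl := interleaved_eq_add_ite hT hs0 hs'0 hcol hcol'
  have hright := corr_self_flip hT hs0 hcol ha hbal'
  have hleft := corr_flip_self hT hs0 hcol ha hbal'
  have hdvd : ∀ τ, K * T ∣ τ → T ∣ τ := fun τ => dvd_trans (dvd_mul_left T K)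
  refine ⟨fun τ => by rw [hright, hleft], fun τ hKT => ?_, fun τ hTτ hKT => ?_, fun τ hTτ => ?_⟩
  · rw [hright, if_pos (hdvd τ hKT), corr_self_of_dvd (interleaved_periodic hT hs0 hcol ha) hKT]
    push_cast
    ring
  · rw [hright, if_pos hTτ, hideal τ hKT]
  · rw [hright, if_neg hTτ, hideal τ (mt (hdvd τ) hTτ)]
    ring

/-- If `d(a_x) = d(a_{T-x}) = c ≠ K` and `s` has ideal autocorrelation, then
`R_{ss'} = R_{s's}` takes exactly the three values `KT - 2K`, `-1 - 2K`, `-1 + 2c`. -/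
theorem stmt17 (K T : ℕ) (hK : 0 < K) (hT : 0 < T)
    (a : ℕ → ℕ → ZMod 2) (s s' : ℕ → ZMod 2)
    (ha : ∀ i, Function.Periodic (a i) K)
    (hs : Function.Periodic s (K * T)) (hs' : Function.Periodic s' (K * T))
    (hs0 : ∀ k, s (k * T) = 0) (hs'0 : ∀ k, s' (k * T) = 1)
    (hcol : ∀ k i, 1 ≤ i → i < T → s (k * T + i) = a i k)
    (hcol' : ∀ k i, 1 ≤ i → i < T → s' (k * T + i) = a i k)
    (c : ℤ) (hcK : c ≠ (K : ℤ))
    (hbal : ∀ x : ℕ, 1 ≤ x → x < T → bal K (a x) = c ∧ bal K (a (T - x)) = c)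
    (hideal : ∀ τ : ℕ, ¬ (K * T ∣ τ) → corr (K * T) s s τ = -1) :
    (∀ τ : ℕ, corr (K * T) s s' τ = corr (K * T) s' s τ) ∧
    (∀ τ : ℕ, K * T ∣ τ → corr (K * T) s s' τ = (K : ℤ) * T - 2 * K) ∧
    (∀ τ : ℕ, T ∣ τ → ¬ (K * T ∣ τ) → corr (K * T) s s' τ = -1 - 2 * K) ∧
    (∀ τ : ℕ, ¬ (T ∣ τ) → corr (K * T) s s' τ = -1 + 2 * c) :=
  stmt17_general K T hT a s s' ha hs0 hs'0 hcol hcol' c hbal hideal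
end
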